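/- For every M ∈ SL(2, ℂ) and every Hermitian matrix H ∈ M₂(ℂ), one has σ_M(α_H) = α_{Mᴴ H M}, where Mᴴ is the conjugate transpose; in particular the set of translations is invariant under every σ_M, and consequently the set of BMS transformations whose data is of the form (±1, α_H) (the translation subgroup 𝓣) is a normal subgroup of the BMS group 𝓑. -/

import Mathlib

noncomputable section

open Matrix

/-- `SL(2, ℂ)`. -/
abbrev SL2C := Matrix.SpecialLinearGroup (Fin 2) ℂ

/-- The complex projective line `ℙ¹(ℂ)`, the projectivization of `ℂ²`. -/
abbrev P1C := Projectivization ℂ (Fin 2 → ℂ)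

instance : Fact (Even (Fintype.card (Fin 2))) := ⟨⟨1, rfl⟩⟩

/-- The squared standard Hermitian norm `‖v‖²` of `v ∈ ℂ²`. -/
def hermNormSq (v : Fin 2 → ℂ) : ℝ := (star v ⬝ᵥ v).re

theorem SL2C.mulVec_ne_zero (M : SL2C) {v : Fin 2 → ℂ} (hv : v ≠ 0) :
    (M : Matrix (Fin 2) (Fin 2) ℂ).mulVec v ≠ 0 := by
  intro h
  apply hv
  have hMM : ((M⁻¹ : SL2C) : Matrix (Fin 2) (Fin 2) ℂ) * (M : Matrix (Fin 2) (Fin 2) ℂ) = 1 := by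
    rw [← Matrix.SpecialLinearGroup.coe_mul, inv_mul_cancel,
      Matrix.SpecialLinearGroup.coe_one]
  calc v = (((M⁻¹ : SL2C) : Matrix (Fin 2) (Fin 2) ℂ) *
          (M : Matrix (Fin 2) (Fin 2) ℂ)).mulVec v := by rw [hMM, Matrix.one_mulVec]
    _ = ((M⁻¹ : SL2C) : Matrix (Fin 2) (Fin 2) ℂ).mulVec
          ((M : Matrix (Fin 2) (Fin 2) ℂ).mulVec v) := by rw [Matrix.mulVec_mulVec]
    _ = 0 := by rw [h, Matrix.mulVec_zero]

/-- The action of `SL(2, ℂ)` on `ℙ¹(ℂ)`: `M • [v] = [M v]`. -/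
def mobAct (M : SL2C) (p : P1C) : P1C :=
  Projectivization.mk ℂ ((M : Matrix (Fin 2) (Fin 2) ℂ).mulVec p.rep)
    (SL2C.mulVec_ne_zero M p.rep_nonzero)

/-- The conformal factor `K_M : ℙ¹(ℂ) → ℝ`, `K_M([v]) = ‖v‖² / ‖M v‖²`. -/
def Kconf (M : SL2C) (p : P1C) : ℝ :=
  hermNormSq p.rep / hermNormSq ((M : Matrix (Fin 2) (Fin 2) ℂ).mulVec p.rep)

/-- The BMS transformation with data `(M, α)`:
`(p, u) ↦ (M • p, K_M(p)·(u + α(p)))`. -/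
def bms (M : SL2C) (α : P1C → ℝ) : P1C × ℝ → P1C × ℝ :=
  fun q => (mobAct M q.1, Kconf M q.1 * (q.2 + α q.1))

/-- `σ_M(α)(p) = K_M(p)⁻¹ · α(M • p)`. -/
def sigmaAct (M : SL2C) (α : P1C → ℝ) : P1C → ℝ :=
  fun p => (Kconf M p)⁻¹ * α (mobAct M p)

/-- The BMS group `𝓑`, as the set of all BMS transformations. -/
def BMSSet : Set ((P1C × ℝ) → (P1C × ℝ)) := {f | ∃ M α, f = bms M α}

/-- The supertranslations `𝓢`: BMS transformations with data `(1, α)`. -/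
def Supertranslations : Set ((P1C × ℝ) → (P1C × ℝ)) := {f | ∃ α, f = bms 1 α}

/-- The 'Lorentz' elements `𝓛`: BMS transformations with data `(M, 0)`. -/
def LorentzSet : Set ((P1C × ℝ) → (P1C × ℝ)) := {f | ∃ M, f = bms M 0}

/-- The translation function `α_H([v]) = (vᴴ H v)/‖v‖²` attached to a Hermitian matrix `H`. -/
def transl (H : Matrix (Fin 2) (Fin 2) ℂ) : P1C → ℝ :=
  fun p => (star p.rep ⬝ᵥ H.mulVec p.rep).re / hermNormSq p.rep

/-- `α : ℙ¹(ℂ) → ℝ` is a translation if `α = α_H` for some Hermitian `H`. -/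
def IsTranslationFn (α : P1C → ℝ) : Prop :=
  ∃ H : Matrix (Fin 2) (Fin 2) ℂ, H.IsHermitian ∧ α = transl H

/-- The translation subgroup `𝓣`: BMS transformations with data `(±1, α_H)`. -/
def TranslSet : Set ((P1C × ℝ) → (P1C × ℝ)) :=
  {f | ∃ (M : SL2C) (α : P1C → ℝ), (M = 1 ∨ M = -1) ∧ IsTranslationFn α ∧ f = bms M α}

/-- `PSL(2, ℂ)`, the quotient of `SL(2, ℂ)` by its center `{1, -1}`. -/
abbrev PSL2C := SL2C ⧸ Subgroup.center SL2C

/-- The good cut of a translation: the graph of `α_H` in `ℙ¹(ℂ) × ℝ`. -/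
def goodCut (H : Matrix (Fin 2) (Fin 2) ℂ) : Set (P1C × ℝ) :=
  {q | q.2 = transl H q.1}

/-!
With `p = [v]`, the factor `K_M(p)⁻¹ = ‖M v‖² / ‖v‖²` in `σ_M(α_H)(p)` cancels the normalisation
of `α_H` at `M v`, leaving `(M v)ᴴ H (M v) / ‖v‖² = vᴴ (Mᴴ H M) v / ‖v‖² = α_{Mᴴ H M}(p)`.
The conformal factor is a cocycle, `K_{MN}(p) = K_M(N • p) K_N(p)`, so BMS transformations compose
as `(M, α) ∘ (N, β) = (M N, β + σ_N α)`; since `±1` act trivially, `𝓣` consists of the `(1, α_H)`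
and is a group because translations are closed under sums and negatives. Conjugating `(1, α)` by
`(M, β)` gives `(1, σ_{M⁻¹} α)`, a translation again by the first part.
-/

open Projectivization

lemma Projectivization.apply_rep_mk {K V X : Type*} [DivisionRing K] [AddCommGroup V] [Module K V]
    {f : V → X} (hf : ∀ c : K, c ≠ 0 → ∀ v, f (c • v) = f v) {w : V} (hw : w ≠ 0) :
    f (mk K w hw).rep = f w := by
  obtain ⟨a, ha⟩ := exists_smul_eq_mk_rep K w hw
  rw [← ha, Units.smul_def, hf _ a.ne_zero]

lemma Matrix.star_smul_dotProduct_mulVec_smul {n R : Type*} [Fintype n] [CommRing R] [StarRing R]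
    (A : Matrix n n R) (c : R) (v : n → R) :
    star (c • v) ⬝ᵥ A *ᵥ (c • v) = star c * c * (star v ⬝ᵥ A *ᵥ v) := by
  rw [mulVec_smul, star_smul, smul_dotProduct, dotProduct_smul, smul_eq_mul, smul_eq_mul]
  ring

lemma Matrix.star_mulVec_dotProduct_mulVec_mulVec {n R : Type*} [Fintype n] [CommRing R]
    [StarRing R] (A M : Matrix n n R) (v : n → R) :
    star (M *ᵥ v) ⬝ᵥ A *ᵥ (M *ᵥ v) = star v ⬝ᵥ (Mᴴ * A * M) *ᵥ v := by
  rw [star_mulVec, ← dotProduct_mulVec, mulVec_mulVec, mulVec_mulVec, Matrix.mul_assoc]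

lemma re_star_smul_dotProduct_mulVec_smul {n : Type*} [Fintype n] (A : Matrix n n ℂ) (c : ℂ)
    (v : n → ℂ) :
    (star (c • v) ⬝ᵥ A *ᵥ (c • v)).re = Complex.normSq c * (star v ⬝ᵥ A *ᵥ v).re := by
  rw [star_smul_dotProduct_mulVec_smul, Complex.star_def, ← Complex.normSq_eq_conj_mul_self,
    Complex.re_ofReal_mul]

lemma hermNormSq_smul (c : ℂ) (v : Fin 2 → ℂ) :
    hermNormSq (c • v) = Complex.normSq c * hermNormSq v := by
  have := re_star_smul_dotProduct_mulVec_smul 1 c v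
  rwa [one_mulVec, one_mulVec] at this

open ComplexOrder in
lemma hermNormSq_pos {v : Fin 2 → ℂ} (hv : v ≠ 0) : 0 < hermNormSq v :=
  (Complex.pos_iff.1 (dotProduct_star_self_pos_iff.2 hv)).1

lemma hermNormSq_neg (v : Fin 2 → ℂ) : hermNormSq (-v) = hermNormSq v := by
  simpa using hermNormSq_smul (-1) v

lemma transl_mk (H : Matrix (Fin 2) (Fin 2) ℂ) {v : Fin 2 → ℂ} (hv : v ≠ 0) :
    transl H (mk ℂ v hv) = (star v ⬝ᵥ H *ᵥ v).re / hermNormSq v := by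
  refine apply_rep_mk (f := fun w ↦ (star w ⬝ᵥ H *ᵥ w).re / hermNormSq w) (fun c hc w => ?_) hv
  rw [re_star_smul_dotProduct_mulVec_smul, hermNormSq_smul,
    mul_div_mul_left _ _ (Complex.normSq_pos.2 hc).ne']

lemma transl_add (H H' : Matrix (Fin 2) (Fin 2) ℂ) :
    transl (H + H') = transl H + transl H' := by
  funext p
  simp only [transl, add_mulVec, dotProduct_add, Complex.add_re, add_div, Pi.add_apply]

lemma transl_neg (H : Matrix (Fin 2) (Fin 2) ℂ) : transl (-H) = -transl H := by
  funext p
  simp only [transl, neg_mulVec, dotProduct_neg, Complex.neg_re, neg_div, Pi.neg_apply]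

lemma transl_zero : transl 0 = 0 := by
  funext p
  simp only [transl, zero_mulVec, dotProduct_zero, Complex.zero_re, zero_div, Pi.zero_apply]

lemma mobAct_eq_smul (M : SL2C) (p : P1C) : mobAct M p = M • p := by
  conv_rhs => rw [← p.mk_rep]
  rfl

lemma Matrix.SpecialLinearGroup.neg_smul_projectivization {ι F : Type*} [Fintype ι]
    [DecidableEq ι] [Field F] [Fact (Even (Fintype.card ι))] (M : SpecialLinearGroup ι F)
    (p : Projectivization F (ι → F)) : (-M) • p = M • p := by
  induction p using Projectivization.ind with
  | h v hv =>
    rw [smul_mk, smul_mk, mk_eq_mk_iff']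
    exact ⟨-1, by simp [Matrix.SpecialLinearGroup.smul_def]⟩

lemma Kconf_mk (M : SL2C) {v : Fin 2 → ℂ} (hv : v ≠ 0) :
    Kconf M (mk ℂ v hv) = hermNormSq v / hermNormSq (M • v) := by
  refine apply_rep_mk (f := fun w ↦ hermNormSq w / hermNormSq (M • w)) (fun c hc w => ?_) hv
  rw [smul_comm M c w, hermNormSq_smul, hermNormSq_smul,
    mul_div_mul_left _ _ (Complex.normSq_pos.2 hc).ne']

lemma Kconf_pos (M : SL2C) (p : P1C) : 0 < Kconf M p :=
  div_pos (hermNormSq_pos p.rep_nonzero) (hermNormSq_pos (SL2C.mulVec_ne_zero M p.rep_nonzero))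

lemma Kconf_one (p : P1C) : Kconf 1 p = 1 := by
  rw [Kconf, Matrix.SpecialLinearGroup.coe_one, one_mulVec]
  exact div_self (hermNormSq_pos p.rep_nonzero).ne'

lemma Kconf_neg (M : SL2C) (p : P1C) : Kconf (-M) p = Kconf M p := by
  rw [Kconf, Kconf, Matrix.SpecialLinearGroup.coe_neg, neg_mulVec, hermNormSq_neg]

lemma Kconf_mul (M N : SL2C) (p : P1C) : Kconf (M * N) p = Kconf M (N • p) * Kconf N p := by
  induction p using Projectivization.ind with
  | h v hv =>
    have hNv : N • v ≠ 0 := SL2C.mulVec_ne_zero N hv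
    rw [smul_mk, Kconf_mk, Kconf_mk, Kconf_mk, mul_smul]
    have := hermNormSq_pos hNv
    field_simp

lemma sigmaAct_one (α : P1C → ℝ) : sigmaAct 1 α = α := by
  funext p
  rw [sigmaAct, Kconf_one, mobAct_eq_smul, one_smul, inv_one, one_mul]

lemma sigmaAct_transl (M : SL2C) (H : Matrix (Fin 2) (Fin 2) ℂ) :
    sigmaAct M (transl H) = transl ((M : Matrix (Fin 2) (Fin 2) ℂ)ᴴ * H * M) := by
  funext p
  induction p using Projectivization.ind with
  | h v hv =>
    rw [sigmaAct, mobAct_eq_smul, smul_mk, Kconf_mk, transl_mk, transl_mk,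
      Matrix.SpecialLinearGroup.smul_def, smul_eq_mulVec, star_mulVec_dotProduct_mulVec_mulVec]
    have := hermNormSq_pos (SL2C.mulVec_ne_zero M hv)
    field_simp

lemma isTranslationFn_zero : IsTranslationFn 0 :=
  ⟨0, isHermitian_zero, transl_zero.symm⟩

lemma IsTranslationFn.add {α β : P1C → ℝ} (hα : IsTranslationFn α) (hβ : IsTranslationFn β) :
    IsTranslationFn (α + β) := by
  obtain ⟨H, hH, rfl⟩ := hα
  obtain ⟨H', hH', rfl⟩ := hβ
  exact ⟨H + H', hH.add hH', (transl_add H H').symm⟩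

lemma IsTranslationFn.neg {α : P1C → ℝ} (hα : IsTranslationFn α) : IsTranslationFn (-α) := by
  obtain ⟨H, hH, rfl⟩ := hα
  exact ⟨-H, hH.neg, (transl_neg H).symm⟩

lemma IsTranslationFn.sigmaAct {α : P1C → ℝ} (hα : IsTranslationFn α) (M : SL2C) :
    IsTranslationFn (sigmaAct M α) := by
  obtain ⟨H, hH, rfl⟩ := hα
  exact ⟨_, isHermitian_conjTranspose_mul_mul _ hH, sigmaAct_transl M H⟩

lemma bms_comp (M N : SL2C) (α β : P1C → ℝ) :
    bms M α ∘ bms N β = bms (M * N) (β + sigmaAct N α) := by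
  funext ⟨p, u⟩
  refine Prod.ext (by simp only [Function.comp_apply, bms, mobAct_eq_smul, mul_smul]) ?_
  simp only [Function.comp_apply, bms, sigmaAct, mobAct_eq_smul, Kconf_mul, Pi.add_apply]
  have := (Kconf_pos N p).ne'
  field_simp
  ring

lemma bms_one_zero : bms 1 0 = id := by
  funext ⟨p, u⟩
  simp [bms, mobAct_eq_smul, Kconf_one]

lemma bms_neg (M : SL2C) (α : P1C → ℝ) : bms (-M) α = bms M α := by
  funext q
  simp only [bms, mobAct_eq_smul, Matrix.SpecialLinearGroup.neg_smul_projectivization, Kconf_neg]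

lemma bms_one_comp_bms_one (α β : P1C → ℝ) : bms 1 α ∘ bms 1 β = bms 1 (β + α) := by
  rw [bms_comp, one_mul, sigmaAct_one]

lemma bms_comp_bms_inv (M : SL2C) (β : P1C → ℝ) :
    bms M β ∘ bms M⁻¹ (-sigmaAct M⁻¹ β) = id := by
  rw [bms_comp, mul_inv_cancel, neg_add_cancel, bms_one_zero]

lemma bms_comp_bms_one_comp_bms_inv (M : SL2C) (α β : P1C → ℝ) :
    bms M β ∘ bms 1 α ∘ bms M⁻¹ (-sigmaAct M⁻¹ β) = bms 1 (sigmaAct M⁻¹ α) := by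
  rw [bms_comp 1, one_mul, bms_comp, mul_inv_cancel]
  congr 1
  abel

lemma mem_translSet_iff {f : P1C × ℝ → P1C × ℝ} :
    f ∈ TranslSet ↔ ∃ α, IsTranslationFn α ∧ f = bms 1 α := by
  constructor
  · rintro ⟨M, α, hM | hM, hα, rfl⟩ <;> subst hM
    · exact ⟨α, hα, rfl⟩
    · exact ⟨α, hα, bms_neg 1 α⟩
  · rintro ⟨α, hα, rfl⟩
    exact ⟨1, α, Or.inl rfl, hα, rfl⟩

/-- `σ_M(α_H) = α_{Mᴴ H M}` for every `M ∈ SL(2, ℂ)` and Hermitian `H`; in particular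
the set of translations is invariant under every `σ_M`, and consequently the translation
subgroup `𝓣` (BMS transformations with data `(±1, α_H)`) is a normal subgroup of `𝓑`. -/
theorem sigma_transl_and_translations_normal :
    (∀ (M : SL2C) (H : Matrix (Fin 2) (Fin 2) ℂ), H.IsHermitian →
      sigmaAct M (transl H) =
        transl ((M : Matrix (Fin 2) (Fin 2) ℂ)ᴴ * H * (M : Matrix (Fin 2) (Fin 2) ℂ))) ∧
    (∀ (M : SL2C) (α : P1C → ℝ), IsTranslationFn α → IsTranslationFn (sigmaAct M α)) ∧
    (id ∈ TranslSet) ∧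
    (∀ t ∈ TranslSet, ∀ t' ∈ TranslSet, t ∘ t' ∈ TranslSet) ∧
    (∀ t ∈ TranslSet, ∃ t' ∈ TranslSet, t' ∘ t = id ∧ t ∘ t' = id) ∧
    (∀ b ∈ BMSSet, ∀ t ∈ TranslSet, ∀ binv : P1C × ℝ → P1C × ℝ,
      binv ∘ b = id → b ∘ binv = id → b ∘ t ∘ binv ∈ TranslSet) := by
  simp_rw [mem_translSet_iff]
  refine ⟨fun M H _ ↦ sigmaAct_transl M H, fun M α hα ↦ hα.sigmaAct M,
    ⟨0, isTranslationFn_zero, bms_one_zero.symm⟩, ?_, ?_, ?_⟩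
  · rintro _ ⟨α, hα, rfl⟩ _ ⟨β, hβ, rfl⟩
    exact ⟨β + α, hβ.add hα, bms_one_comp_bms_one α β⟩
  · rintro _ ⟨α, hα, rfl⟩
    refine ⟨bms 1 (-α), ⟨-α, hα.neg, rfl⟩, ?_, ?_⟩
    · rw [bms_one_comp_bms_one, add_neg_cancel, bms_one_zero]
    · rw [bms_one_comp_bms_one, neg_add_cancel, bms_one_zero]
  · rintro _ ⟨M, β, rfl⟩ _ ⟨α, hα, rfl⟩ binv hleft _
    have hbinv : binv = bms M⁻¹ (-sigmaAct M⁻¹ β) :=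
      (Function.leftInverse_iff_comp.2 hleft).eq_rightInverse
        (Function.leftInverse_iff_comp.2 (bms_comp_bms_inv M β))
    subst hbinv
    exact ⟨_, hα.sigmaAct M⁻¹, bms_comp_bms_one_comp_bms_inv M α β⟩
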